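/- For any pair of strongly connected digraphs G_R, G_M on n vertices and any r > 0, the fixation probability f_{G_R,G_M} of the two-graph Moran process started from a single uniformly random mutant is at most 1 − 1/(r+n). -/

import Mathlib

/-!
From a single mutant `u`, the first step is a resident replacing `u` with probability
`(∑ j ≠ u, wR j u) / (r + n - 1)`, and the chain is then absorbed at `∅`; so fixation from `{u}`
has probability at most one minus that. Since the rows of `wR` sum to `1`, its off-diagonal
entries sum to `n`, and averaging over `u` gives `1 - 1 / (r + n - 1) ≤ 1 - 1 / (r + n)`.
-/

open Finset

variable {V : Type*} [Fintype V] [DecidableEq V]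

/-- One-step transition probability of the two-graph Moran process with relative fitness `r`,
resident weight matrix `wR` and mutant weight matrix `wM`, from mutant set `S` to set `T`.
An individual is chosen with probability proportional to its fitness (residents `1`,
mutants `r`) and reproduces on a neighbour in its own graph. -/
noncomputable def moranStep (r : ℝ) (wR wM : V → V → ℝ) (S T : Finset V) : ℝ :=
  ((∑ i ∈ S, ∑ j ∈ Sᶜ, (if T = insert j S then r * wM i j else 0)) +
   (∑ j ∈ Sᶜ, ∑ i ∈ S, (if T = S.erase i then wR j i else 0)) +
   (if T = S then (∑ i ∈ S, ∑ j ∈ S, r * wM i j) + (∑ i ∈ Sᶜ, ∑ j ∈ Sᶜ, wR i j) else 0))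
  / (S.card * r + ((Fintype.card V : ℝ) - S.card))

/-- `t`-step transition probabilities of the two-graph Moran process. -/
noncomputable def moranIter (r : ℝ) (wR wM : V → V → ℝ) : ℕ → Finset V → Finset V → ℝ
  | 0 => fun S T => if T = S then 1 else 0
  | (t + 1) => fun S T => ∑ U : Finset V, moranStep r wR wM S U * moranIter r wR wM t U T

/-- Fixation probability of the two-graph Moran process started from mutant set `S`:
the probability of eventual absorption at the all-mutant state `V` (the probability of
being at the absorbing state `univ` is nondecreasing in `t`, so the limit is the `⨆`). -/
noncomputable def fixProbFrom (r : ℝ) (wR wM : V → V → ℝ) (S : Finset V) : ℝ :=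
  ⨆ t : ℕ, moranIter r wR wM t S Finset.univ

/-- Fixation probability of the two-graph Moran process started from a single
uniformly random mutant. -/
noncomputable def fixProb (r : ℝ) (wR wM : V → V → ℝ) : ℝ :=
  (∑ u : V, fixProbFrom r wR wM {u}) / (Fintype.card V)

/-- A weight matrix is a strongly connected graph structure: positive-weight edges
connect every ordered pair of vertices. -/
def StronglyConnectedW (w : V → V → ℝ) : Prop :=
  ∀ i j : V, Relation.ReflTransGen (fun a b => 0 < w a b) i j

/-- Admissible weight matrix: nonnegative, zero diagonal, rows sum to 1. -/
def IsWeightMatrix (w : V → V → ℝ) : Prop :=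
  (∀ i j, 0 ≤ w i j) ∧ (∀ i, w i i = 0) ∧ (∀ i, ∑ j, w i j = 1)

lemma sum_univ_sum_sum_ite_eq {α β γ : Type*} [Fintype γ] [DecidableEq γ] (s : Finset α)
    (t : Finset β) (f : α → β → γ) (g : α → β → ℝ) :
    ∑ x, ∑ i ∈ s, ∑ j ∈ t, (if x = f i j then g i j else 0) = ∑ i ∈ s, ∑ j ∈ t, g i j := by
  rw [sum_comm]
  refine sum_congr rfl fun i _ => ?_
  rw [sum_comm]
  simp

section MoranChain

variable {r : ℝ} {wR wM : V → V → ℝ}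

omit [DecidableEq V] in
lemma moranStep_denom_pos [Nonempty V] (hr : 0 < r) (S : Finset V) :
    0 < (#S : ℝ) * r + (Fintype.card V - #S) := by
  rcases S.eq_empty_or_nonempty with rfl | hS
  · simpa using Fintype.card_pos
  · have hcard : (#S : ℝ) ≤ Fintype.card V := by exact_mod_cast card_le_univ S
    have : (0 : ℝ) < #S * r := mul_pos (by exact_mod_cast hS.card_pos) hr
    linarith

lemma sum_moranStep [Nonempty V] (hr : 0 < r) (hR₁ : ∀ i, ∑ j, wR i j = 1)
    (hM₁ : ∀ i, ∑ j, wM i j = 1) (S : Finset V) : ∑ T, moranStep r wR wM S T = 1 := by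
  have mutants : ∑ i ∈ S, ∑ j ∈ Sᶜ, r * wM i j + ∑ i ∈ S, ∑ j ∈ S, r * wM i j = #S * r := by
    simp only [← sum_add_distrib, ← mul_sum, ← mul_add, sum_compl_add_sum, hM₁, mul_one,
      sum_const, nsmul_eq_mul]
    exact mul_comm _ _
  have residents : ∑ j ∈ Sᶜ, ∑ i ∈ S, wR j i + ∑ i ∈ Sᶜ, ∑ j ∈ Sᶜ, wR i j =
      Fintype.card V - #S := by
    simp [← sum_add_distrib, sum_add_sum_compl, hR₁, card_compl, card_le_univ]
  simp only [moranStep, ← sum_div, sum_add_distrib, sum_univ_sum_sum_ite_eq, sum_ite_eq',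
    mem_univ, if_true]
  rw [div_eq_one_iff_eq (moranStep_denom_pos hr S).ne']
  linarith

lemma moranStep_nonneg [Nonempty V] (hr : 0 < r) (hR₀ : ∀ i j, 0 ≤ wR i j)
    (hM₀ : ∀ i j, 0 ≤ wM i j) (S T : Finset V) : 0 ≤ moranStep r wR wM S T := by
  have := hr.le
  refine div_nonneg ?_ (moranStep_denom_pos hr S).le
  repeat' first
    | apply add_nonneg | apply sum_nonneg; intros | apply ite_nonneg | apply mul_nonneg
    | assumption | exact le_rfl | apply hR₀ | apply hM₀

lemma moranIter_nonneg [Nonempty V] (hr : 0 < r) (hR₀ : ∀ i j, 0 ≤ wR i j)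
    (hM₀ : ∀ i j, 0 ≤ wM i j) (t : ℕ) (S T : Finset V) : 0 ≤ moranIter r wR wM t S T := by
  induction t generalizing S with
  | zero => exact ite_nonneg zero_le_one le_rfl
  | succ t ih => exact sum_nonneg fun U _ => mul_nonneg (moranStep_nonneg hr hR₀ hM₀ S U) (ih U)

lemma moranIter_le_one [Nonempty V] (hr : 0 < r) (hR₀ : ∀ i j, 0 ≤ wR i j)
    (hM₀ : ∀ i j, 0 ≤ wM i j) (hR₁ : ∀ i, ∑ j, wR i j = 1) (hM₁ : ∀ i, ∑ j, wM i j = 1)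
    (t : ℕ) (S T : Finset V) : moranIter r wR wM t S T ≤ 1 := by
  induction t generalizing S with
  | zero => exact ite_le_one le_rfl zero_le_one
  | succ t ih =>
    calc ∑ U, moranStep r wR wM S U * moranIter r wR wM t U T
        ≤ ∑ U, moranStep r wR wM S U :=
          sum_le_sum fun U _ => mul_le_of_le_one_right (moranStep_nonneg hr hR₀ hM₀ S U) (ih U)
      _ = 1 := sum_moranStep hr hR₁ hM₁ S

lemma moranStep_empty_of_ne {T : Finset V} (hT : T ≠ ∅) : moranStep r wR wM ∅ T = 0 := by
  simp [moranStep, hT]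

lemma moranIter_empty_of_ne {T : Finset V} (hT : T ≠ ∅) (t : ℕ) :
    moranIter r wR wM t ∅ T = 0 := by
  induction t with
  | zero => exact if_neg hT
  | succ t ih =>
    refine sum_eq_zero fun U _ => ?_
    rcases eq_or_ne U ∅ with rfl | hU
    · rw [ih, mul_zero]
    · rw [moranStep_empty_of_ne hU, zero_mul]

lemma moranStep_singleton_empty (u : V) :
    moranStep r wR wM {u} ∅ = (∑ j ∈ {u}ᶜ, wR j u) / (r + (Fintype.card V - 1)) := by
  simp [moranStep, eq_comm (a := (∅ : Finset V))]

lemma moranIter_succ_univ_le [Nonempty V] (hr : 0 < r) (hR₀ : ∀ i j, 0 ≤ wR i j)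
    (hM₀ : ∀ i j, 0 ≤ wM i j) (hR₁ : ∀ i, ∑ j, wR i j = 1) (hM₁ : ∀ i, ∑ j, wM i j = 1)
    (t : ℕ) (S : Finset V) :
    moranIter r wR wM (t + 1) S univ ≤ 1 - moranStep r wR wM S ∅ := by
  have hterm : ∀ U, moranStep r wR wM S U * moranIter r wR wM t U univ ≤
      if U = ∅ then 0 else moranStep r wR wM S U := by
    intro U
    split_ifs with hU
    · rw [hU, moranIter_empty_of_ne univ_nonempty.ne_empty, mul_zero]
    · exact mul_le_of_le_one_right (moranStep_nonneg hr hR₀ hM₀ S U)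
        (moranIter_le_one hr hR₀ hM₀ hR₁ hM₁ t U univ)
  calc moranIter r wR wM (t + 1) S univ
      ≤ ∑ U, if U = ∅ then 0 else moranStep r wR wM S U := sum_le_sum fun U _ => hterm U
    _ = 1 - moranStep r wR wM S ∅ := by
      rw [← sum_moranStep hr hR₁ hM₁ S, ← add_sum_erase _ _ (mem_univ ∅)]
      simp [sum_ite, filter_ne']

lemma fixProbFrom_le_one_sub_moranStep_empty [Nonempty V] (hr : 0 < r)
    (hR₀ : ∀ i j, 0 ≤ wR i j) (hM₀ : ∀ i j, 0 ≤ wM i j) (hR₁ : ∀ i, ∑ j, wR i j = 1)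
    (hM₁ : ∀ i, ∑ j, wM i j = 1) {S : Finset V} (hS : S ≠ univ) :
    fixProbFrom r wR wM S ≤ 1 - moranStep r wR wM S ∅ := by
  refine ciSup_le fun t => ?_
  cases t with
  | zero =>
    simp only [moranIter, if_neg hS.symm]
    exact (moranIter_nonneg hr hR₀ hM₀ 1 S univ).trans
      (moranIter_succ_univ_le hr hR₀ hM₀ hR₁ hM₁ 0 S)
  | succ t => exact moranIter_succ_univ_le hr hR₀ hM₀ hR₁ hM₁ t S

end MoranChain

namespace IsWeightMatrix

variable {w : V → V → ℝ}

omit [DecidableEq V] in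
lemma univ_ne_singleton (hw : IsWeightMatrix w) (u : V) : (univ : Finset V) ≠ {u} := by
  intro h
  have hrow := hw.2.2 u
  rw [h, sum_singleton, hw.2.1 u] at hrow
  exact zero_ne_one hrow

lemma sum_sum_compl_singleton (hw : IsWeightMatrix w) :
    ∑ u, ∑ j ∈ {u}ᶜ, w j u = Fintype.card V := by
  calc ∑ u, ∑ j ∈ {u}ᶜ, w j u = ∑ u, ∑ j, w j u :=
        sum_congr rfl fun u _ => by rw [compl_singleton, sum_erase (f := (w · u)) _ (hw.2.1 u)]
    _ = Fintype.card V := by simp [sum_comm (γ := V), hw.2.2]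

end IsWeightMatrix

theorem fixation_general_upper_bound_general
    {V : Type*} [Fintype V] [DecidableEq V] [Nonempty V]
    (r : ℝ) (hr : 0 < r) (wR wM : V → V → ℝ)
    (hwR : IsWeightMatrix wR) (hwM : IsWeightMatrix wM) :
    fixProb r wR wM ≤ 1 - 1 / (r + (Fintype.card V : ℝ)) := by
  have hn : (1 : ℝ) ≤ Fintype.card V := Nat.one_le_cast.2 Fintype.card_pos
  have hsingle (u : V) : fixProbFrom r wR wM {u} ≤
      1 - (∑ j ∈ {u}ᶜ, wR j u) / (r + (Fintype.card V - 1)) := by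
    rw [← moranStep_singleton_empty (wM := wM)]
    exact fixProbFrom_le_one_sub_moranStep_empty hr hwR.1 hwM.1 hwR.2.2 hwM.2.2
      (hwR.univ_ne_singleton u).symm
  calc fixProb r wR wM
      ≤ (∑ u, (1 - (∑ j ∈ {u}ᶜ, wR j u) / (r + (Fintype.card V - 1)))) / Fintype.card V := by
        unfold fixProb
        gcongr with u
        exact hsingle u
    _ = 1 - 1 / (r + (Fintype.card V - 1)) := by
        have hd : r + (Fintype.card V - 1) ≠ 0 := by linarith
        rw [sum_sub_distrib, ← sum_div, hwR.sum_sum_compl_singleton, sum_const, card_univ,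
          nsmul_one]
        field_simp
    _ ≤ 1 - 1 / (r + Fintype.card V) := by gcongr; linarith

/-- **General upper bound on the fixation probability.** For any pair of strongly connected
weighted digraphs `wR, wM` on `n` vertices and any `r > 0`, the fixation probability of
the two-graph Moran process started from a single uniformly random mutant is at most
`1 − 1/(r + n)`. -/
theorem fixation_general_upper_bound
    {V : Type*} [Fintype V] [DecidableEq V] [Nonempty V]
    (r : ℝ) (hr : 0 < r) (wR wM : V → V → ℝ)
    (hwR : IsWeightMatrix wR) (hwM : IsWeightMatrix wM)
    (hscR : StronglyConnectedW wR) (hscM : StronglyConnectedW wM) :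
    fixProb r wR wM ≤ 1 - 1 / (r + (Fintype.card V : ℝ)) :=
  fixation_general_upper_bound_general r hr wR wM hwR hwM
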